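/- Let β ∈ (0,1] and let X be an integrable real random variable such that X − E[X] ≤ 1 almost surely and E[ (X − E[X])² ] ≤ −E[X]/β. Then E[ exp(β X) ] ≤ 1. -/
import Mathlib


open MeasureTheory

lemma exp_le_one_add_add_sq {y : ℝ} (hy : y ≤ 1) : Real.exp y ≤ 1 + y + y ^ 2 := by
  rcases le_or_gt y 0 with h | h
  · have h1 : 1 + (-y) ≤ Real.exp (-y) := by linarith [Real.add_one_le_exp (-y)]
    have h2 : Real.exp y * Real.exp (-y) = 1 := by
      rw [← Real.exp_add]; simp
    nlinarith [Real.exp_pos y, Real.exp_pos (-y)]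
  · have h' := Real.exp_bound' h.le hy (n := 3) (by norm_num)
    norm_num [Finset.sum_range_succ, Nat.factorial] at h'
    nlinarith [sq_nonneg y, pow_le_one₀ h.le hy (n := 3)]

/-- Moment-generating-function estimate: if `β ∈ (0,1]` and `X` is an
integrable random variable with `X − E[X] ≤ 1` almost surely and
`E[(X − E[X])²] ≤ −E[X]/β`, then `E[exp (β X)] ≤ 1`. -/
theorem stmt16 {Ω : Type*} [MeasurableSpace Ω] (P : Measure Ω) [IsProbabilityMeasure P]
    (β : ℝ) (hβ : β ∈ Set.Ioc (0:ℝ) 1) (X : Ω → ℝ) (hint : Integrable X P)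
    (hsq : Integrable (fun ω => (X ω - ∫ x, X x ∂P) ^ 2) P)
    (hbd : ∀ᵐ ω ∂P, X ω - ∫ x, X x ∂P ≤ 1)
    (hvar : ∫ ω, (X ω - ∫ x, X x ∂P) ^ 2 ∂P ≤ -(∫ x, X x ∂P) / β) :
    ∫ ω, Real.exp (β * X ω) ∂P ≤ 1 := by
  obtain ⟨hβ0, hβ1⟩ := hβ
  set μ := ∫ x, X x ∂P with hμ
  -- the quadratic dominating function
  set g : Ω → ℝ := fun ω => 1 + β * (X ω - μ) + β ^ 2 * (X ω - μ) ^ 2 with hg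
  have hintY : Integrable (fun ω => X ω - μ) P := hint.sub (integrable_const μ)
  have hI1 : Integrable (fun ω => 1 + β * (X ω - μ)) P :=
    (integrable_const (1:ℝ)).add (hintY.const_mul β)
  have hg_int : Integrable g P := hI1.add (hsq.const_mul (β ^ 2))
  have hae : ∀ᵐ ω ∂P, Real.exp (β * (X ω - μ)) ≤ g ω := by
    filter_upwards [hbd] with ω h
    have hy : β * (X ω - μ) ≤ 1 := by
      rcases le_or_gt (X ω - μ) 0 with h0 | h0
      · nlinarith
      · nlinarith
    have := exp_le_one_add_add_sq hy
    simp only [hg]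
    nlinarith
  have hexp_int : Integrable (fun ω => Real.exp (β * (X ω - μ))) P := by
    refine Integrable.mono' hg_int ?_ ?_
    · exact (Real.measurable_exp.comp_aemeasurable
        ((hint.aemeasurable.sub aemeasurable_const).const_mul β)).aestronglyMeasurable
    · filter_upwards [hae] with ω h
      rw [Real.norm_eq_abs, abs_of_pos (Real.exp_pos _)]
      exact h
  have hEY : ∫ ω, (X ω - μ) ∂P = 0 := by
    rw [integral_sub hint (integrable_const μ)]
    simp [hμ]
  have h1 : ∫ ω, Real.exp (β * (X ω - μ)) ∂P ≤ 1 - β * μ := by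
    have := integral_mono_ae hexp_int hg_int hae
    have hg_eval : ∫ ω, g ω ∂P = 1 + β ^ 2 * ∫ ω, (X ω - μ) ^ 2 ∂P := by
      simp only [hg]
      rw [integral_add hI1 (hsq.const_mul (β ^ 2)),
        integral_add (integrable_const (1:ℝ)) (hintY.const_mul β),
        integral_const_mul, integral_const_mul, hEY]
      simp
    rw [hg_eval] at this
    have : ∫ ω, Real.exp (β * (X ω - μ)) ∂P ≤ 1 + β ^ 2 * (-μ / β) := by
      nlinarith [sq_nonneg β]
    calc ∫ ω, Real.exp (β * (X ω - μ)) ∂P ≤ 1 + β ^ 2 * (-μ / β) := this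
      _ = 1 - β * μ := by field_simp; ring
  have hsplit : ∫ ω, Real.exp (β * X ω) ∂P
      = Real.exp (β * μ) * ∫ ω, Real.exp (β * (X ω - μ)) ∂P := by
    rw [← integral_const_mul]
    congr 1
    funext ω
    rw [← Real.exp_add]
    ring_nf
  rw [hsplit]
  have h2 : Real.exp (β * μ) * (1 - β * μ) ≤ 1 := by
    have := Real.add_one_le_exp (-(β * μ))
    have h3 : Real.exp (β * μ) * Real.exp (-(β * μ)) = 1 := by
      rw [← Real.exp_add]; simp
    nlinarith [Real.exp_pos (β * μ), Real.exp_pos (-(β * μ))]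
  calc Real.exp (β * μ) * ∫ ω, Real.exp (β * (X ω - μ)) ∂P
      ≤ Real.exp (β * μ) * (1 - β * μ) := by
        exact mul_le_mul_of_nonneg_left h1 (Real.exp_pos _).le
    _ ≤ 1 := h2
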